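/- arXiv:2204.10229 — 2 statements merged into one kernel-verified Lean document; each statement's English description precedes it below -/
import Mathlib

section
/- Mode-n t-rank via the Hot-SVD core: let A ∈ ℂ_p^{I₁×⋯×I_N} be a tubal tensor of order N, for each n let A_(n) = U_n * Σ_n * V_n^H be a t-SVD of the mode-n unfolding, and set S := A *₁ U₁^H *₂ U₂^H ⋯ *_N U_N^H. Then for each n, the number of nonzero tubal scalars on the diagonal of Σ_n equals the number of indices α ∈ {1,…,I_n} for which the α-th row tubal vector of S_(n) is nonzero (equivalently, for which the subtensor S_{i_n=α} is nonzero). -/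
/-!
STATEMENT 12: Mode-n t-rank via the Hot-SVD core: if A_(n) = U_n * Σ_n * V_n^H is a
t-SVD of each mode-n unfolding and S := A *₁ U₁^H ⋯ *_N U_N^H, then for each n the
number of nonzero tubal scalars on the diagonal of Σ_n equals the number of indices α
for which the α-th row tubal vector of S_(n) (equivalently the subtensor S_{i_n=α})
is nonzero.
-/

open scoped BigOperators

/-- Tubal scalars of length `p`: vectors in `ℂ^p`. -/
abbrev TubalScalar (p : ℕ) := Fin p → ℂ

variable {p : ℕ}

/-- Tensor-tensor product of tubal scalars with respect to the invertible
linear transformation `L`: `a * b := L⁻¹(L a ⊙ L b)`. -/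
noncomputable def tmul (L : TubalScalar p ≃ₗ[ℂ] TubalScalar p) (a b : TubalScalar p) :
    TubalScalar p :=
  L.symm (L a * L b)

/-- Tensor-tensor product of tubal matrices: `(A*B)(i,k) := Σ_j A(i,j)*B(j,k)`. -/
noncomputable def tMul {I J K : Type*} [Fintype J] (L : TubalScalar p ≃ₗ[ℂ] TubalScalar p)
    (A : I → J → TubalScalar p) (B : J → K → TubalScalar p) : I → K → TubalScalar p :=
  fun i k => ∑ j, tmul L (A i j) (B j k)

/-- The `n`-mode product of a tubal tensor `A` of shape `I : Fin N → ℕ` with a tubal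
matrix `U ∈ ℂ_p^{J×I_n}`:
`(A *_n U)(i₁,…,i_{n−1},j,i_{n+1},…,i_N) = Σ_{i_n} A(i₁,…,i_N)*U(j,i_n)`. -/
noncomputable def modeProd {N : ℕ} (L : TubalScalar p ≃ₗ[ℂ] TubalScalar p) (I : Fin N → ℕ)
    (A : ((m : Fin N) → Fin (I m)) → TubalScalar p) (n : Fin N) (J : ℕ)
    (U : Fin J → Fin (I n) → TubalScalar p) :
    ((m : Fin N) → Fin (Function.update I n J m)) → TubalScalar p :=
  fun idx => ∑ i : Fin (I n),
    tmul L
      (A fun m =>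
        if h : m = n then Fin.cast (congrArg I h).symm i
        else Fin.cast (by rw [Function.update_of_ne h]) (idx m))
      (U (Fin.cast (by rw [Function.update_self]) (idx n)) i)

/-- The column index type of the mode-`n` unfolding: tuples
`(i₁,…,i_{n−1},i_{n+1},…,i_N)` ranging over all modes other than `n`. -/
abbrev Cidx {N : ℕ} (I : Fin N → ℕ) (n : Fin N) :=
  (m : {m : Fin N // m ≠ n}) → Fin (I m.1)

/-- Insert the value `a` at position `n` into a tuple `c` over the remaining modes,
producing a full multi-index `(i₁,…,i_{n−1},a,i_{n+1},…,i_N)`. -/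
def insertAt {N : ℕ} {I : Fin N → ℕ} (n : Fin N) (a : Fin (I n)) (c : Cidx I n) :
    (m : Fin N) → Fin (I m) :=
  fun m => if h : m = n then Fin.cast (congrArg I h).symm a else c ⟨m, h⟩

/-- The mode-`n` unfolding of a tubal tensor: the tubal matrix with rows indexed by
`i_n`, columns indexed by the tuples over the remaining modes, and entry
`A_(n)(i_n,(i₁,…,i_{n−1},i_{n+1},…,i_N)) = A(i₁,…,i_N)`. -/
def unfold {N : ℕ} (I : Fin N → ℕ) (A : ((m : Fin N) → Fin (I m)) → TubalScalar p)
    (n : Fin N) : Fin (I n) → Cidx I n → TubalScalar p :=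
  fun a c => A (insertAt n a c)

/-- The full multilinear tubal product `S *₁ U₁ *₂ U₂ ⋯ *_N U_N`, given entrywise by
`(S *₁ U₁ ⋯ *_N U_N)(i₁,…,i_N) = Σ_{j₁,…,j_N} S(j₁,…,j_N)*U₁(i₁,j₁)*⋯*U_N(i_N,j_N)`
(the tensor-tensor products of the tubal scalars are computed via `L`). -/
noncomputable def multiProd {N : ℕ} (L : TubalScalar p ≃ₗ[ℂ] TubalScalar p)
    (I J : Fin N → ℕ) (S : ((m : Fin N) → Fin (I m)) → TubalScalar p)
    (U : (n : Fin N) → Fin (J n) → Fin (I n) → TubalScalar p) :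
    ((m : Fin N) → Fin (J m)) → TubalScalar p :=
  fun idx => ∑ jdx : (m : Fin N) → Fin (I m),
    L.symm (L (S jdx) * ∏ n : Fin N, L (U n (idx n) (jdx n)))
/-- Hermitian transpose: `(L(A^H))^{(k)} = (L(A)^{(k)})^H`, i.e. entrywise
`A^H(j,i) = L⁻¹(conj(L(A(i,j))))`. -/
noncomputable def tHerm {I J : Type*} (L : TubalScalar p ≃ₗ[ℂ] TubalScalar p)
    (A : I → J → TubalScalar p) : J → I → TubalScalar p :=
  fun j i => L.symm (star (L (A i j)))

/-- The identity tubal matrix: `e = L⁻¹((1,…,1))` on the diagonal, zero elsewhere. -/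
noncomputable def tId {I : Type*} [DecidableEq I] (L : TubalScalar p ≃ₗ[ℂ] TubalScalar p) :
    I → I → TubalScalar p :=
  fun i j => if i = j then L.symm 1 else 0

/-- A square tubal matrix is unitary if `A*A^H = A^H*A = 𝓘`. -/
noncomputable def tUnitary {I : Type*} [Fintype I] [DecidableEq I]
    (L : TubalScalar p ≃ₗ[ℂ] TubalScalar p) (A : I → I → TubalScalar p) : Prop :=
  tMul L A (tHerm L A) = tId L ∧ tMul L (tHerm L A) A = tId L

/-- The `i`-th diagonal tubal scalar of a (possibly rectangular) tubal matrix,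
taken to be `0` when the diagonal position does not exist. -/
noncomputable def sdiag {a b : ℕ} (S : Fin a → Fin b → TubalScalar p) (i : Fin a) :
    TubalScalar p :=
  if h : (i : ℕ) < b then S i ⟨(i : ℕ), h⟩ else 0

/-- A tubal matrix is f-diagonal if each of its frontal slices is a diagonal matrix,
i.e. all entries off the (numeric) diagonal are the zero tubal scalar. -/
def fDiag {a b : ℕ} (S : Fin a → Fin b → TubalScalar p) : Prop :=
  ∀ (i : Fin a) (j : Fin b), (i : ℕ) ≠ (j : ℕ) → S i j = 0

/-!
Apply `L` entrywise: tubal products become ordinary matrix products over the commutative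
star ring `ℂ^p`, and the Hermitian transpose becomes the conjugate transpose. There, the
mode-`n` unfolding of the core is `S_(n) = U_nᴴ A_(n) (⊗_{m ≠ n} U_mᴴ)ᵀ`, and substituting
the t-SVD of `A_(n)` gives `S_(n) = Σ_n Q` with `Q Qᴴ = 1`. Hence the rows of `S_(n)` and of
`Σ_n` vanish for the same indices, and since `Σ_n` is f-diagonal its `α`-th row vanishes
exactly when its `α`-th diagonal tubal scalar does.
-/

open Matrix

namespace Matrix

section piKronecker

variable {κ α : Type*} [Fintype κ] {ι ι' ι'' : κ → Type*}

def piKronecker [CommMonoid α] (B : (k : κ) → Matrix (ι k) (ι' k) α) :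
    Matrix ((k : κ) → ι k) ((k : κ) → ι' k) α :=
  of fun x y => ∏ k, B k (x k) (y k)

variable [CommSemiring α]

theorem piKronecker_mul [DecidableEq κ] [∀ k, Fintype (ι' k)]
    (B : (k : κ) → Matrix (ι k) (ι' k) α) (C : (k : κ) → Matrix (ι' k) (ι'' k) α) :
    piKronecker B * piKronecker C = piKronecker fun k => B k * C k := by
  ext x z
  simp only [piKronecker, mul_apply, of_apply, ← Finset.prod_mul_distrib]
  exact (Fintype.prod_sum fun k y => B k (x k) y * C k y (z k)).symm

theorem piKronecker_one [∀ k, DecidableEq (ι k)] :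
    piKronecker (fun k => (1 : Matrix (ι k) (ι k) α)) = 1 := by
  ext x y
  by_cases hxy : x = y
  · subst hxy
    simp [piKronecker]
  · obtain ⟨k, hk⟩ := Function.ne_iff.mp hxy
    rw [one_apply_ne hxy]
    exact Finset.prod_eq_zero (Finset.mem_univ k) (one_apply_ne hk)

theorem conjTranspose_piKronecker [StarRing α] (B : (k : κ) → Matrix (ι k) (ι' k) α) :
    (piKronecker B)ᴴ = piKronecker fun k => (B k)ᴴ := by
  ext x y
  simp [piKronecker, star_prod]

theorem piKronecker_mul_conjTranspose_self [StarRing α] [DecidableEq κ] [∀ k, Fintype (ι' k)]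
    [∀ k, DecidableEq (ι k)] {B : (k : κ) → Matrix (ι k) (ι' k) α}
    (hB : ∀ k, B k * (B k)ᴴ = 1) : piKronecker B * (piKronecker B)ᴴ = 1 := by
  simp only [conjTranspose_piKronecker, piKronecker_mul, hB]
  exact piKronecker_one

end piKronecker

section

variable {α m n o : Type*} [Semiring α] [Fintype n] [Fintype o] [DecidableEq n]

theorem mul_apply_eq_zero_iff {X : Matrix m n α} {Q : Matrix n o α} {Q' : Matrix o n α}
    (hQ : Q * Q' = 1) (i : m) : (X * Q) i = 0 ↔ X i = 0 := by
  refine ⟨fun h => ?_, fun h => by rw [mul_apply_eq_vecMul, h, zero_vecMul]⟩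
  rw [← vecMul_one (X i), ← hQ, ← vecMul_vecMul, ← mul_apply_eq_vecMul, h, zero_vecMul]

theorem mul_mul_conjTranspose_eq_one [StarRing α] [DecidableEq m] {X : Matrix m n α}
    {Y : Matrix n o α} (hX : X * Xᴴ = 1) (hY : Y * Yᴴ = 1) : X * Y * (X * Y)ᴴ = 1 := by
  rw [conjTranspose_mul, Matrix.mul_assoc, ← Matrix.mul_assoc Y, hY, Matrix.one_mul, hX]

end

end Matrix

/-- The tubal matrix `L(A)` of the paper, as a matrix over the commutative ring `ℂ^p`. -/
noncomputable def tHat (L : TubalScalar p ≃ₗ[ℂ] TubalScalar p) {ι κ : Type*}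
    (A : ι → κ → TubalScalar p) : Matrix ι κ (TubalScalar p) :=
  of fun i j => L (A i j)

section tHat

variable (L : TubalScalar p ≃ₗ[ℂ] TubalScalar p) {ι κ τ : Type*}

theorem tHat_injective : Function.Injective (tHat L : (ι → κ → TubalScalar p) → _) :=
  fun _ _ h => funext₂ fun i j => L.injective (congrFun₂ h i j)

theorem tHat_apply_eq_zero_iff (A : ι → κ → TubalScalar p) (i : ι) :
    tHat L A i = 0 ↔ A i = 0 := by
  simp only [funext_iff, tHat, of_apply, Pi.zero_apply, L.map_eq_zero_iff]

theorem tHat_tMul [Fintype κ] (A : ι → κ → TubalScalar p) (B : κ → τ → TubalScalar p) :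
    tHat L (tMul L A B) = tHat L A * tHat L B := by
  ext i k
  simp [tHat, tMul, tmul, map_sum, mul_apply]

theorem tHat_tHerm (A : ι → κ → TubalScalar p) : tHat L (tHerm L A) = (tHat L A)ᴴ := by
  ext i k
  simp [tHat, tHerm, conjTranspose_apply]

theorem tHat_tId [DecidableEq ι] : tHat L (tId L (I := ι)) = 1 := by
  ext i k
  simp [tHat, tId, one_apply, apply_ite]

theorem tUnitary_iff [Fintype ι] [DecidableEq ι] (A : ι → ι → TubalScalar p) :
    tUnitary L A ↔ tHat L A * (tHat L A)ᴴ = 1 ∧ (tHat L A)ᴴ * tHat L A = 1 := by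
  rw [tUnitary, ← (tHat_injective L).eq_iff, ← (tHat_injective L).eq_iff, tHat_tMul, tHat_tMul,
    tHat_tHerm, tHat_tId]

end tHat

theorem fDiag.sdiag_eq_zero_iff {a b : ℕ} {S : Fin a → Fin b → TubalScalar p} (hS : fDiag S)
    (i : Fin a) : sdiag S i = 0 ↔ S i = 0 := by
  refine ⟨fun h => funext fun j => ?_, fun h => ?_⟩
  · by_cases hij : (i : ℕ) = j
    · simpa [sdiag, hij, Fin.ext_iff] using h
    · exact hS i j hij
  · unfold sdiag
    split_ifs <;> simp [h]

section insertAt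

variable {N : ℕ} {I : Fin N → ℕ} (n : Fin N)

theorem insertAt_self (a : Fin (I n)) (c : Cidx I n) : insertAt n a c n = a := by
  simp [insertAt]

theorem insertAt_val (a : Fin (I n)) (c : Cidx I n) (m : {m : Fin N // m ≠ n}) :
    insertAt n a c m.1 = c m := by
  simp [insertAt, m.2]

theorem sum_eq_sum_insertAt {M : Type*} [AddCommMonoid M] (f : ((m : Fin N) → Fin (I m)) → M) :
    ∑ x, f x = ∑ a, ∑ c, f (insertAt n a c) := by
  rw [← (Equiv.piSplitAt n fun m => Fin (I m)).symm.sum_comp, Fintype.sum_prod_type]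
  congr! with a c
  funext m
  by_cases h : m = n
  · subst h
    simp [insertAt]
  · simp [insertAt, h]

theorem prod_insertAt_insertAt {J : Fin N → ℕ} {M : Type*} [CommMonoid M]
    (f : (m : Fin N) → Fin (J m) → Fin (I m) → M) (a : Fin (J n)) (c : Cidx J n)
    (b : Fin (I n)) (d : Cidx I n) :
    ∏ m, f m (insertAt n a c m) (insertAt n b d m)
      = f n a b * ∏ m : {m : Fin N // m ≠ n}, f m.1 (c m) (d m) := by
  simp only [Fintype.prod_eq_mul_prod_subtype_ne _ n, insertAt_self, insertAt_val]

end insertAt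

theorem tHat_unfold_multiProd {N : ℕ} (L : TubalScalar p ≃ₗ[ℂ] TubalScalar p)
    (I J : Fin N → ℕ) (S : ((m : Fin N) → Fin (I m)) → TubalScalar p)
    (U : (n : Fin N) → Fin (J n) → Fin (I n) → TubalScalar p) (n : Fin N) :
    tHat L (unfold J (multiProd L I J S U) n)
      = tHat L (U n) * tHat L (unfold I S n)
          * (piKronecker fun m : {m : Fin N // m ≠ n} => tHat L (U m.1))ᵀ := by
  refine Matrix.ext fun a c => ?_
  simp only [tHat, unfold, multiProd, of_apply, map_sum, LinearEquiv.apply_symm_apply]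
  rw [sum_eq_sum_insertAt (M := TubalScalar p) n]
  simp only [prod_insertAt_insertAt n fun m x y => L (U m x y), mul_apply, transpose_apply,
    piKronecker, of_apply, Finset.sum_mul]
  rw [Finset.sum_comm]
  exact Finset.sum_congr rfl fun b _ => Finset.sum_congr rfl fun d _ => by ring

theorem mode_t_rank_via_core {N : ℕ} (L : TubalScalar p ≃ₗ[ℂ] TubalScalar p)
    (I : Fin N → ℕ) (A : ((m : Fin N) → Fin (I m)) → TubalScalar p)
    (M : Fin N → ℕ) (e : (n : Fin N) → Cidx I n ≃ Fin (M n))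
    (U : (n : Fin N) → Fin (I n) → Fin (I n) → TubalScalar p)
    (Sig : (n : Fin N) → Fin (I n) → Fin (M n) → TubalScalar p)
    (V : (n : Fin N) → Fin (M n) → Fin (M n) → TubalScalar p)
    (hU : ∀ n, tUnitary L (U n)) (hV : ∀ n, tUnitary L (V n))
    (hdiag : ∀ n, fDiag (Sig n))
    (hfact : ∀ n, (fun i j => unfold I A n i ((e n).symm j))
        = tMul L (U n) (tMul L (Sig n) (tHerm L (V n)))) :
    ∀ n : Fin N,
      Nat.card {i : Fin (I n) // sdiag (Sig n) i ≠ 0}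
        = Nat.card {a : Fin (I n) //
            ∃ c : Cidx I n,
              multiProd L I I A (fun m => tHerm L (U m)) (insertAt n a c) ≠ 0} := by
  intro n
  simp only [tUnitary_iff] at hU hV
  set W := (piKronecker fun m : {m : Fin N // m ≠ n} => tHat L (U m.1))ᴴᵀ
  set Vₑ := (tHat L (V n))ᴴ.submatrix id (e n)
  have hA : tHat L (unfold I A n)
      = (tHat L (U n) * tHat L (Sig n) * (tHat L (V n))ᴴ).submatrix id (e n) := by
    have := congrArg (tHat L) (hfact n)
    rw [tHat_tMul, tHat_tMul, tHat_tHerm, ← Matrix.mul_assoc] at this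
    rw [← this]
    exact Matrix.ext fun b d => by simp [tHat]
  have hS : tHat L (unfold I (multiProd L I I A fun m => tHerm L (U m)) n)
      = tHat L (Sig n) * (Vₑ * W) := by
    simp only [tHat_unfold_multiProd, tHat_tHerm, ← conjTranspose_piKronecker, hA]
    rw [submatrix_mul _ _ id id (e n) Function.bijective_id, submatrix_id_id]
    simp only [← Matrix.mul_assoc, (hU n).2, Matrix.one_mul]
    rfl
  have hVₑ : Vₑ * Vₑᴴ = 1 := by
    rw [conjTranspose_submatrix, conjTranspose_conjTranspose, submatrix_mul_equiv, (hV n).2,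
      submatrix_id_id]
  have hW : W * Wᴴ = 1 := by
    rw [conjTranspose_transpose_eq_transpose_conjTranspose, conjTranspose_conjTranspose,
      ← transpose_mul, piKronecker_mul_conjTranspose_self fun m => (hU m.1).1, transpose_one]
  refine Nat.card_congr (Equiv.subtypeEquivRight fun a => ?_)
  rw [Ne, (hdiag n).sdiag_eq_zero_iff, ← tHat_apply_eq_zero_iff L,
    ← mul_apply_eq_zero_iff (mul_mul_conjTranspose_eq_one hVₑ hW), ← hS,
    tHat_apply_eq_zero_iff, ← Ne, Function.ne_iff]
  rfl
end

section
/- Norm invariance of Hot-SVD: assume L = c·W where c ∈ ℂ is nonzero and W : ℂ^p → ℂ^p is unitary for the standard Hermitian inner product. If A = S *₁ U₁ *₂ U₂ ⋯ *_N U_N where A, S ∈ ℂ_p^{I₁×⋯×I_N} are tubal tensors of order N and each U_n ∈ ℂ_p^{I_n×I_n} is a unitary tubal matrix, then ‖A‖ = ‖S‖ in the Frobenius norm. -/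
open scoped BigOperators

variable {p : ℕ}

/-- The Frobenius norm: the square root of the sum, over all positions and all `p`
components, of the squared absolute values of the components. -/
noncomputable def tnorm {ι : Type*} [Fintype ι] (X : ι → TubalScalar p) : ℝ :=
  Real.sqrt (∑ i : ι, ∑ k : Fin p, ‖X i k‖ ^ 2)

/-!
Applying `L` turns a tubal product into `p` independent ordinary multilinear products, one for
each frontal slice, and unitarity of `U_n` makes every frontal slice of `L(U_n)` a unitary
matrix. An ordinary multilinear product with matrices of orthonormal columns preserves the
Frobenius norm (expand the square and sum out each mode using `uᴴ u = 1`), so `L(A)` and `L(S)`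
have the same Frobenius norm. Since `L = c • W` with `W` isometric, `L` scales Frobenius norms
by `‖c‖ ≠ 0`, which cancels.
-/

open Finset Matrix

section TuckerProduct

variable {R : Type*} [CommSemiring R] [StarRing R] {σ : Type*} [Fintype σ] [DecidableEq σ]
  {ι κ : σ → Type*} [∀ n, Fintype (ι n)] [∀ n, DecidableEq (ι n)] [∀ n, Fintype (κ n)]

def tuckerProduct (s : (∀ n, ι n) → R) (u : ∀ n, Matrix (κ n) (ι n) R) : (∀ n, κ n) → R :=
  fun i => ∑ j, s j * ∏ n, u n (i n) (j n)

theorem sum_star_mul_self_tuckerProduct (s : (∀ n, ι n) → R) (u : ∀ n, Matrix (κ n) (ι n) R)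
    (hu : ∀ n, (u n)ᴴ * u n = 1) :
    ∑ i, star (tuckerProduct s u i) * tuckerProduct s u i = ∑ j, star (s j) * s j := by
  have expand : ∀ i, star (tuckerProduct s u i) * tuckerProduct s u i =
      ∑ j, ∑ j', star (s j) * s j' * ∏ n, star (u n (i n) (j n)) * u n (i n) (j' n) := by
    intro i
    simp only [tuckerProduct, star_sum, sum_mul, mul_sum, star_mul', star_prod,
      prod_mul_distrib]
    rw [sum_comm]
    exact sum_congr rfl fun _ _ => sum_congr rfl fun _ _ => by ring
  have orthonormal : ∀ j j' : ∀ n, ι n,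
      ∑ i : ∀ n, κ n, ∏ n, star (u n (i n) (j n)) * u n (i n) (j' n) =
        if j = j' then 1 else 0 := by
    intro j j'
    rw [← Fintype.prod_sum fun n a => star (u n a (j n)) * u n a (j' n)]
    simp_rw [← conjTranspose_apply, ← mul_apply, hu, one_apply, prod_boole, funext_iff]
    simp
  simp_rw [expand]
  rw [sum_comm]
  refine sum_congr rfl fun j _ => ?_
  simp_rw [sum_comm (γ := ∀ n, κ n), ← mul_sum, orthonormal]
  simp

theorem sum_norm_sq_tuckerProduct {𝕜 : Type*} [RCLike 𝕜] (s : (∀ n, ι n) → 𝕜)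
    (u : ∀ n, Matrix (κ n) (ι n) 𝕜) (hu : ∀ n, (u n)ᴴ * u n = 1) :
    ∑ i, ‖tuckerProduct s u i‖ ^ 2 = ∑ j, ‖s j‖ ^ 2 := by
  have h := sum_star_mul_self_tuckerProduct s u hu
  simp only [RCLike.star_def, RCLike.conj_mul] at h
  exact_mod_cast h

end TuckerProduct

section Tubal

variable (L : TubalScalar p ≃ₗ[ℂ] TubalScalar p)

/-- The `k`-th frontal slice `L(A)^{(k)}` of a tubal matrix in the transform domain. -/
def frontalSlice {I J : Type*} (A : I → J → TubalScalar p) (k : Fin p) : Matrix I J ℂ :=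
  Matrix.of fun i j => L (A i j) k

theorem tUnitary.conjTranspose_frontalSlice_mul_self {I : Type*} [Fintype I] [DecidableEq I]
    {A : I → I → TubalScalar p} (hA : tUnitary L A) (k : Fin p) :
    (frontalSlice L A k)ᴴ * frontalSlice L A k = 1 := by
  ext i j
  have h := congrFun (congrArg L (congrFun (congrFun hA.2 i) j)) k
  simp only [tMul, tHerm, tmul, tId, map_sum, LinearEquiv.apply_symm_apply, apply_ite L,
    map_zero, Finset.sum_apply, Pi.mul_apply, Pi.star_apply] at h
  simpa [frontalSlice, mul_apply, one_apply, apply_ite (fun f : TubalScalar p => f k)] using h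

theorem apply_multiProd_apply {N : ℕ} (I J : Fin N → ℕ)
    (S : ((m : Fin N) → Fin (I m)) → TubalScalar p)
    (U : (n : Fin N) → Fin (J n) → Fin (I n) → TubalScalar p) (idx : (m : Fin N) → Fin (J m))
    (k : Fin p) :
    L (multiProd L I J S U idx) k =
      tuckerProduct (fun j => L (S j) k) (fun n => frontalSlice L (U n) k) idx := by
  simp [multiProd, tuckerProduct, frontalSlice, Finset.prod_apply]

end Tubal

theorem sum_norm_sq_apply_of_eq_smul {κ : Type*} [Fintype κ] {f g : (κ → ℂ) → κ → ℂ} {c : ℂ}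
    (hg : ∀ x, ∑ k, star (g x k) * g x k = ∑ k, star (x k) * x k) (hf : ∀ x, f x = c • g x)
    (x : κ → ℂ) :
    ∑ k, ‖f x k‖ ^ 2 = ‖c‖ ^ 2 * ∑ k, ‖x k‖ ^ 2 := by
  have h := hg x
  simp only [Complex.star_def, Complex.conj_mul'] at h
  simp only [hf, Pi.smul_apply, smul_eq_mul, norm_mul, mul_pow, ← mul_sum]
  congr 1
  exact_mod_cast h

theorem tnorm_eq_of_sum_norm_sq_transform_eq {ι ι' : Type*} [Fintype ι] [Fintype ι']
    (L : TubalScalar p ≃ₗ[ℂ] TubalScalar p) (c : ℂ) (W : TubalScalar p → TubalScalar p)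
    (hc : c ≠ 0) (hW : ∀ x, ∑ k, star (W x k) * W x k = ∑ k, star (x k) * x k)
    (hLW : ∀ x, L x = c • W x) (A : ι → TubalScalar p) (S : ι' → TubalScalar p)
    (h : ∀ k, ∑ i, ‖L (A i) k‖ ^ 2 = ∑ j, ‖L (S j) k‖ ^ 2) :
    tnorm A = tnorm S := by
  have hc2 : ‖c‖ ^ 2 ≠ 0 := by positivity
  unfold tnorm
  congr 1
  refine mul_left_cancel₀ hc2 ?_
  simp only [mul_sum, ← sum_norm_sq_apply_of_eq_smul hW hLW]
  rw [sum_comm, sum_congr rfl fun k _ => h k, sum_comm]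

theorem tnorm_multiProd_unitary {N : ℕ} (L : TubalScalar p ≃ₗ[ℂ] TubalScalar p)
    (c : ℂ) (W : TubalScalar p →ₗ[ℂ] TubalScalar p) (hc : c ≠ 0)
    (hW : ∀ x y : TubalScalar p, ∑ k, star (W x k) * W y k = ∑ k, star (x k) * y k)
    (hLW : ∀ x, L x = c • W x)
    (I : Fin N → ℕ)
    (A S : ((m : Fin N) → Fin (I m)) → TubalScalar p)
    (U : (n : Fin N) → Fin (I n) → Fin (I n) → TubalScalar p)
    (hU : ∀ n, tUnitary L (U n))
    (hA : A = multiProd L I I S U) :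
    tnorm A = tnorm S := by
  refine tnorm_eq_of_sum_norm_sq_transform_eq L c W hc (fun x => hW x x) hLW A S fun k => ?_
  simp only [hA, apply_multiProd_apply]
  exact sum_norm_sq_tuckerProduct _ _ fun n => (hU n).conjTranspose_frontalSlice_mul_self L k
end
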